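/- arXiv:1901.09000 — 2 statements merged into one kernel-verified Lean document; each statement's English description precedes it below -/
import Mathlib

section
/- Let g : ℝ≥0 → ℝ≥0 be a non-increasing function with limit g_∞ = lim_{s→∞} g(s). Then for every r ∈ ℝ, the averaged integral (1/Vol B(R)) ∫_{x ∈ B(R)} g((d⁺_R(x) − r)⁺) dx converges to g_∞ as R → ∞, where d⁺_R(x) := 2R − d⁻_R(x) and d⁻_R(x) is the distance from x to ∂B(R). -/
/-!
Along a coordinate axis every point of `[-R,R]^d` is within distance `R` of the boundary, so
`d⁺_R ≥ R` on the whole cube. Since `g` is non-increasing, the integrand is squeezed between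
`g_∞` and `g((R - r)⁺)`, hence so is its average, and both bounds tend to `g_∞`.
-/

open MeasureTheory Filter Topology

/-- The cube `[-R,R]^d` in Euclidean space. -/
def cube (d : ℕ) (R : ℝ) : Set (EuclideanSpace ℝ (Fin d)) := {x | ∀ i, |x i| ≤ R}

theorem AntitoneOn.antitone_comp_max {α β : Type*} [LinearOrder α] [Preorder β] {g : α → β}
    {a : α} (hg : AntitoneOn g (Set.Ici a)) : Antitone fun t => g (max t a) :=
  fun _ _ hst => hg (le_max_right _ _) (le_max_right _ _) (max_le_max_right a hst)

theorem setIntegral_div_measureReal_mem_Icc {α : Type*} [MeasurableSpace α]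
    {μ : Measure α} {s : Set α} {f : α → ℝ} {a b : ℝ} (hs : MeasurableSet s) (h0 : μ s ≠ 0)
    (hfin : μ s ≠ ⊤) (hf : AEStronglyMeasurable f μ) (hab : ∀ x ∈ s, f x ∈ Set.Icc a b) :
    (∫ x in s, f x ∂μ) / μ.real s ∈ Set.Icc a b := by
  have hab' : ∀ᵐ x ∂μ.restrict s, f x ∈ Set.Icc a b := ae_restrict_of_forall_mem hs hab
  have hfi : IntegrableOn f s μ := Measure.integrableOn_of_bounded hfin hf
    (hab'.mono fun x hx => abs_le_max_abs_abs hx.1 hx.2)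
  rw [div_eq_inv_mul, ← smul_eq_mul, ← setAverage_eq]
  exact (convex_Icc a b).set_average_mem isClosed_Icc h0 hfin hab' hfi

theorem cube_eq_preimage (d : ℕ) (R : ℝ) :
    cube d R = WithLp.ofLp ⁻¹' Set.univ.pi fun _ : Fin d => Set.Icc (-R) R := by
  ext x
  simp only [cube, Set.mem_ofPred_eq, Set.mem_preimage, Set.mem_univ_pi, Set.mem_Icc, abs_le]

theorem isClosed_cube (d : ℕ) (R : ℝ) : IsClosed (cube d R) := by
  rw [cube_eq_preimage]
  exact (isClosed_set_pi fun _ _ => isClosed_Icc).preimage (PiLp.continuous_ofLp 2 _)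

theorem interior_cube (d : ℕ) (R : ℝ) : interior (cube d R) = {x | ∀ i, |x i| < R} := by
  rw [cube_eq_preimage, ← PiLp.coe_continuousLinearEquiv 2 ℝ,
    ← ContinuousLinearEquiv.coe_toHomeomorph, ← Homeomorph.preimage_interior,
    interior_pi_set Set.finite_univ]
  ext x
  simp [abs_lt]

theorem volume_cube (d : ℕ) (R : ℝ) : volume (cube d R) = ENNReal.ofReal (2 * R) ^ d := by
  rw [cube_eq_preimage, ← MeasurableEquiv.coe_toLp_symm,
    (EuclideanSpace.volume_preserving_symm_measurableEquiv_toLp (Fin d)).measure_preimage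
      (MeasurableSet.univ_pi fun _ => measurableSet_Icc).nullMeasurableSet,
    volume_pi_pi]
  simp [Real.volume_Icc, two_mul]

theorem measureReal_cube (d : ℕ) {R : ℝ} (hR : 0 ≤ R) :
    volume.real (cube d R) = (2 * R) ^ d := by
  rw [measureReal_def, volume_cube, ENNReal.toReal_pow, ENNReal.toReal_ofReal (by positivity)]

theorem infDist_frontier_cube_le_abs_sub {d : ℕ} {R : ℝ} {x : EuclideanSpace ℝ (Fin d)}
    (hx : x ∈ cube d R) (i : Fin d) {c : ℝ} (hc : |c| = R) :
    Metric.infDist x (frontier (cube d R)) ≤ |c - x i| := by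
  set y := x + (c - x i) • EuclideanSpace.single i (1 : ℝ)
  have hy : ∀ j, y j = if j = i then c else x j := by
    intro j
    by_cases hj : j = i
    · subst hj; simp [y]
    · simp [y, hj]
  have hy_frontier : y ∈ frontier (cube d R) := by
    rw [(isClosed_cube d R).frontier_eq, interior_cube]
    refine ⟨fun j => ?_, fun h => (h i).ne (by rw [hy, if_pos rfl, hc])⟩
    rw [hy]
    split_ifs
    · exact hc.le
    · exact hx j
  calc Metric.infDist x (frontier (cube d R)) ≤ dist x y :=
        Metric.infDist_le_dist_of_mem hy_frontier
    _ = |c - x i| := by simp [y, dist_eq_norm, norm_smul]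

theorem infDist_frontier_cube_le {d : ℕ} (hd : 1 ≤ d) {R : ℝ} {x : EuclideanSpace ℝ (Fin d)}
    (hx : x ∈ cube d R) : Metric.infDist x (frontier (cube d R)) ≤ R := by
  set i : Fin d := ⟨0, hd⟩
  have hR : 0 ≤ R := (abs_nonneg _).trans (hx i)
  have hxi := abs_le.mp (hx i)
  have hup := infDist_frontier_cube_le_abs_sub hx i (c := R) (abs_of_nonneg hR)
  have hlow := infDist_frontier_cube_le_abs_sub hx i (c := -R) (by rw [abs_neg, abs_of_nonneg hR])
  rw [abs_of_nonneg (by linarith)] at hup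
  rw [abs_of_nonpos (by linarith)] at hlow
  linarith

theorem mean_conservation_stmt1_general (d : ℕ) (hd : 1 ≤ d)
    (g : ℝ → ℝ) (hanti : AntitoneOn g (Set.Ici 0))
    (ginf : ℝ) (hlim : Tendsto g atTop (𝓝 ginf)) (r : ℝ) :
    Tendsto (fun R : ℝ =>
        (∫ x in cube d R,
          g (max ((2 * R - Metric.infDist x (frontier (cube d R))) - r) 0)) / (2 * R) ^ d)
      atTop (𝓝 ginf) := by
  set φ : ℝ → ℝ := fun t => g (max t 0)
  have hφ : Antitone φ := hanti.antitone_comp_max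
  have hφlim : Tendsto φ atTop (𝓝 ginf) :=
    hlim.comp (tendsto_atTop_mono (fun t => le_max_left t 0) tendsto_id)
  have hmean : ∀ R > 0, (∫ x in cube d R,
      φ ((2 * R - Metric.infDist x (frontier (cube d R))) - r)) / (2 * R) ^ d ∈
        Set.Icc ginf (φ (R - r)) := by
    intro R hR
    have hmeas : Measurable fun x : EuclideanSpace ℝ (Fin d) =>
        φ ((2 * R - Metric.infDist x (frontier (cube d R))) - r) :=
      hφ.measurable.comp ((continuous_const.sub
        (Metric.continuous_infDist_pt _)).sub continuous_const).measurable
    rw [← measureReal_cube d hR.le]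
    refine setIntegral_div_measureReal_mem_Icc (isClosed_cube d R).measurableSet
      (by simp [volume_cube, hR])
      (by rw [volume_cube]; exact ENNReal.pow_ne_top ENNReal.ofReal_ne_top)
      hmeas.aestronglyMeasurable fun x hx =>
        ⟨hφ.le_of_tendsto hφlim _, hφ (by linarith [infDist_frontier_cube_le hd hx])⟩
  refine tendsto_of_tendsto_of_tendsto_of_le_of_le' tendsto_const_nhds
    (hφlim.comp (tendsto_atTop_add_const_right _ (-r) tendsto_id)) ?_ ?_ <;>
    filter_upwards [eventually_gt_atTop 0] with R hR
  · exact (hmean R hR).1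
  · exact (hmean R hR).2

/-- Lemma: for a non-increasing `g : [0,∞) → [0,∞)` with limit `g∞` at infinity,
the average over `B(R) = [-R,R]^d` of `g((d⁺_R(x) - r)⁺)` converges to `g∞`,
where `d⁺_R(x) = 2R - d⁻_R(x)` and `d⁻_R(x)` is the distance from `x` to `∂B(R)`. -/
theorem mean_conservation_stmt1 (d : ℕ) (hd : 1 ≤ d)
    (g : ℝ → ℝ) (hg0 : ∀ s, 0 ≤ s → 0 ≤ g s) (hanti : AntitoneOn g (Set.Ici 0))
    (ginf : ℝ) (hlim : Tendsto g atTop (𝓝 ginf)) (r : ℝ) :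
    Tendsto (fun R : ℝ =>
        (∫ x in cube d R,
          g (max ((2 * R - Metric.infDist x (frontier (cube d R))) - r) 0)) / (2 * R) ^ d)
      atTop (𝓝 ginf) :=
  mean_conservation_stmt1_general d hd g hanti ginf hlim r
end

section
/- Let B ⊆ [−R,R]^d be a finite union of unit lattice cubes k + [0,1]^d (k ∈ ℤ^d), and let A ⊆ B be a closed set. Then the number of connected components of [−R,R]^d \ A that are not contained in B is at most Vol(B) + c·R^{d−1}, for an absolute constant c depending only on d. -/
open MeasureTheory

def latticeCube (d : ℕ) (k : Fin d → ℤ) : Set (EuclideanSpace ℝ (Fin d)) :=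
  {x | ∀ i, (k i : ℝ) ≤ x i ∧ x i ≤ (k i : ℝ) + 1}

/-!
Every component `C` of `[-R,R]^d \ A` that leaves `B` contains the trace on the cube of an open
lattice cell `k ∉ I`: near a point of `C \ B` there is a point with no integer coordinate, and the
open cell around it misses `B ⊇ A`. Among these free cells of `C` pick one, `k`, whose `i`-th
coordinate is maximal. The cell `k + eᵢ` above it lies in `I` or misses the cube: otherwise the open
box spanned by `k` and `k + eᵢ` is convex and misses `A`, so `k + eᵢ` would be a higher free cell
of `C`. A free cell belongs to only one component, so `C ↦ k + eᵢ` is injective into `I` union the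
layer of `(2⌈R⌉)^(d-1)` cells just above the face `xᵢ = R` of the cube.
-/

open Set Metric

theorem convex_setOf_forall_apply_mem {ι : Type*} {s : ι → Set ℝ} (hs : ∀ i, Convex ℝ (s i)) :
    Convex ℝ {x : EuclideanSpace ℝ ι | ∀ i, x i ∈ s i} :=
  fun _ hx _ hy _ _ ha hb hab i => hs i (hx i) (hy i) ha hb hab

theorem dense_setOf_forall_apply_notMem_range_intCast (ι : Type*) [Fintype ι] :
    Dense {x : EuclideanSpace ℝ ι | ∀ i, x i ∉ range ((↑) : ℤ → ℝ)} :=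
  ((dense_pi univ fun _ _ => (countable_range ((↑) : ℤ → ℝ)).dense_compl ℝ).preimage
    (PiLp.homeomorph 2 fun _ : ι => ℝ).isOpenMap).mono fun _ hx i => (mem_univ_pi.mp hx) i

theorem IsPreconnected.subset_connectedComponentIn_of_mem {X : Type*} [TopologicalSpace X]
    {s F : Set X} {x z : X} (hs : IsPreconnected s) (hsF : s ⊆ F) (hzs : z ∈ s)
    (hz : z ∈ _root_.connectedComponentIn F x) : s ⊆ _root_.connectedComponentIn F x := by
  rw [connectedComponentIn_eq hz]
  exact hs.subset_connectedComponentIn hzs hsF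

theorem add_single_mem_piFinset_or {ι : Type*} [Fintype ι] [DecidableEq ι] {a b : ℤ}
    {k : ι → ℤ} (i : ι) (hk : k ∈ Fintype.piFinset fun _ => Finset.Ico a b) :
    k + Pi.single i 1 ∈ Fintype.piFinset (fun _ => Finset.Ico a b) ∨
      k + Pi.single i 1 ∈ Fintype.piFinset (Function.update (fun _ => Finset.Ico a b) i {b}) := by
  simp only [Fintype.mem_piFinset, Finset.mem_Ico] at hk ⊢
  by_cases hb : k i + 1 < b
  · left
    intro j
    rcases eq_or_ne j i with rfl | hji
    · simp only [Pi.add_apply, Pi.single_eq_same]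
      exact ⟨(hk j).1.trans (Int.le_add_one le_rfl), hb⟩
    · simpa [hji] using hk j
  · right
    intro j
    rcases eq_or_ne j i with rfl | hji
    · simp only [Pi.add_apply, Pi.single_eq_same, Function.update_self, Finset.mem_singleton]
      have := (hk j).2
      omega
    · simpa [hji] using hk j

theorem card_piFinset_update_singleton {ι α : Type*} [Fintype ι] [DecidableEq ι] [DecidableEq α]
    (s : Finset α) (i : ι) (b : α) :
    (Fintype.piFinset (Function.update (fun _ => s) i {b})).card =
      s.card ^ (Fintype.card ι - 1) := by
  simp only [Fintype.card_piFinset, Function.apply_update (fun _ => Finset.card),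
    Finset.prod_update_of_mem (Finset.mem_univ i)]
  simp [Finset.card_sdiff]

theorem Icc_add_single_subset {ι : Type*} [DecidableEq ι] (k : ι → ℤ) (i : ι) :
    Icc k (k + Pi.single i 1) ⊆ {k, k + Pi.single i 1} := by
  intro m ⟨hkm, hmk⟩
  have hj : ∀ j ≠ i, m j = k j := fun j hj =>
    le_antisymm (by simpa [hj] using hmk j) (hkm j)
  rcases (hkm i).eq_or_lt with hi | hi
  · left
    ext j
    rcases eq_or_ne j i with rfl | hji
    exacts [hi.symm, hj j hji]
  · right
    ext j
    rcases eq_or_ne j i with rfl | hji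
    · have := hmk j
      simp only [Pi.add_apply, Pi.single_eq_same] at this ⊢
      exact le_antisymm this hi
    · simp [hj j hji, hji]

section

variable {d : ℕ}

theorem cube_eq_setOf_forall_mem_Icc (R : ℝ) : cube d R = {x | ∀ i, x i ∈ Icc (-R) R} := by
  simp only [cube, abs_le, mem_Icc]

theorem convex_cube (R : ℝ) : Convex ℝ (cube d R) := by
  rw [cube_eq_setOf_forall_mem_Icc]; exact convex_setOf_forall_apply_mem fun _ => convex_Icc _ _

theorem isClosed_latticeCube (k : Fin d → ℤ) : IsClosed (latticeCube d k) := by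
  simp only [latticeCube, ofPred_forall, ofPred_and]
  exact isClosed_iInter fun i => (isClosed_le continuous_const (PiLp.continuous_apply 2 _ i)).inter
    (isClosed_le (PiLp.continuous_apply 2 _ i) continuous_const)

theorem ball_zero_subset_cube (R : ℝ) : ball (0 : EuclideanSpace ℝ (Fin d)) R ⊆ cube d R :=
  fun x hx i => by
    simpa using (PiLp.norm_apply_le x i).trans (mem_ball_zero_iff.mp hx).le

theorem exists_mem_ball_inter_cube_forall_notMem_range_intCast {R δ : ℝ} (hR : 0 < R)
    {y : EuclideanSpace ℝ (Fin d)} (hy : y ∈ cube d R) (hδ : 0 < δ) :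
    ∃ z ∈ ball y δ ∩ cube d R, ∀ i, z i ∉ range ((↑) : ℤ → ℝ) := by
  have hint : (interior (cube d R)).Nonempty :=
    ⟨0, interior_maximal (ball_zero_subset_cube R) isOpen_ball (mem_ball_self hR)⟩
  have hy' : y ∈ closure (interior (cube d R)) := by
    rw [(convex_cube R).closure_interior_eq_closure_of_nonempty_interior hint]
    exact subset_closure hy
  obtain ⟨z, ⟨hzball, hzint⟩, hz⟩ :=
    (dense_setOf_forall_apply_notMem_range_intCast (Fin d)).inter_open_nonempty _
      (isOpen_ball.inter isOpen_interior) (mem_closure_iff.mp hy' _ isOpen_ball (mem_ball_self hδ))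
  exact ⟨z, ⟨hzball, interior_subset hzint⟩, hz⟩

def openBox (a b : Fin d → ℤ) : Set (EuclideanSpace ℝ (Fin d)) :=
  {x | ∀ i, x i ∈ Ioo (a i : ℝ) (b i)}

theorem convex_openBox (a b : Fin d → ℤ) : Convex ℝ (openBox a b) :=
  convex_setOf_forall_apply_mem fun _ => convex_Ioo _ _

theorem isPreconnected_openBox_inter_cube (a b : Fin d → ℤ) (R : ℝ) :
    IsPreconnected (openBox a b ∩ cube d R) :=
  ((convex_openBox a b).inter (convex_cube R)).isPreconnected

theorem openBox_subset_openBox {a b a' b' : Fin d → ℤ} (ha : a' ≤ a) (hb : b ≤ b') :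
    openBox a b ⊆ openBox a' b' := fun _ hx i =>
  Ioo_subset_Ioo (Int.cast_le.mpr (ha i)) (Int.cast_le.mpr (hb i)) (hx i)

theorem openBox_subset_latticeCube (k : Fin d → ℤ) : openBox k (k + 1) ⊆ latticeCube d k :=
  fun x hx i => by
    have := hx i
    simp only [Pi.add_apply, Pi.one_apply, Int.cast_add, Int.cast_one, mem_Ioo] at this
    exact ⟨this.1.le, this.2.le⟩

theorem mem_Icc_of_mem_openBox_of_mem_latticeCube {a b m : Fin d → ℤ}
    {x : EuclideanSpace ℝ (Fin d)} (hxa : x ∈ openBox a (b + 1)) (hxm : x ∈ latticeCube d m) :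
    m ∈ Icc a b := by
  refine ⟨fun i => ?_, fun i => ?_⟩
  · have : (a i : ℝ) < m i + 1 := (hxa i).1.trans_le (hxm i).2
    exact Int.lt_add_one_iff.mp (by exact_mod_cast this)
  · have : (m i : ℝ) < b i + 1 := by simpa using (hxm i).1.trans_lt (hxa i).2
    exact Int.lt_add_one_iff.mp (by exact_mod_cast this)

theorem openBox_inter_cube_nonempty_iff {R : ℝ} {k : Fin d → ℤ} :
    (openBox k (k + 1) ∩ cube d R).Nonempty ↔ ∀ i, k i ∈ Finset.Ico (-⌈R⌉) ⌈R⌉ := by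
  have hlow (i : Fin d) : -⌈R⌉ ≤ k i ↔ -R < k i + 1 := by
    rw [neg_le, ← Int.sub_one_lt_iff, Int.lt_ceil, neg_lt]
    push_cast
    constructor <;> intro h <;> linarith
  simp only [Finset.mem_Ico, hlow, Int.lt_ceil]
  constructor
  · rintro ⟨x, hxk, hxR⟩ i
    have hxk := hxk i
    have hxR := abs_le.mp (hxR i)
    simp only [Pi.add_apply, Pi.one_apply, Int.cast_add, Int.cast_one, mem_Ioo] at hxk
    constructor <;> linarith
  · intro h
    have (i : Fin d) : ∃ t ∈ Ioo (k i : ℝ) (k i + 1), t ∈ Icc (-R) R := by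
      have hR : 0 < R := by
        by_contra! hR
        have : k i < 0 := by exact_mod_cast (h i).2.trans_le hR
        have : (k i : ℝ) + 1 ≤ 0 := by exact_mod_cast this
        linarith [(h i).1]
      obtain ⟨t, ht₁, ht₂⟩ := exists_between (max_lt (lt_min (lt_add_one (k i : ℝ)) (h i).2)
        (lt_min (h i).1 (neg_lt_self hR)))
      rw [max_lt_iff] at ht₁
      rw [lt_min_iff] at ht₂
      exact ⟨t, ⟨ht₁.1, ht₂.1⟩, ht₁.2.le, ht₂.2.le⟩
    choose t ht htR using this
    exact ⟨WithLp.toLp 2 t, fun i => by simpa using ht i, fun i => abs_le.mpr (htR i)⟩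

end

section

variable {d : ℕ} {R : ℝ} {I : Finset (Fin d → ℤ)} {A : Set (EuclideanSpace ℝ (Fin d))}

theorem isClosed_biUnion_latticeCube (I : Finset (Fin d → ℤ)) :
    IsClosed (⋃ m ∈ I, latticeCube d m) :=
  I.finite_toSet.isClosed_biUnion fun m _ => isClosed_latticeCube m

theorem openBox_inter_cube_subset_diff (hAB : A ⊆ ⋃ m ∈ I, latticeCube d m) {a b : Fin d → ℤ}
    (h : ∀ m ∈ I, m ∉ Icc a b) : openBox a (b + 1) ∩ cube d R ⊆ cube d R \ A := by
  refine fun x hx => ⟨hx.2, fun hxA => ?_⟩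
  obtain ⟨m, hm, hxm⟩ := mem_iUnion₂.mp (hAB hxA)
  exact h m hm (mem_Icc_of_mem_openBox_of_mem_latticeCube hx.1 hxm)

def freeCells (I : Finset (Fin d → ℤ)) (R : ℝ) (C : Set (EuclideanSpace ℝ (Fin d))) :
    Set (Fin d → ℤ) :=
  {k | k ∉ I ∧ (openBox k (k + 1) ∩ cube d R).Nonempty ∧ openBox k (k + 1) ∩ cube d R ⊆ C}

theorem finite_freeCells (I : Finset (Fin d → ℤ)) (R : ℝ) (C : Set (EuclideanSpace ℝ (Fin d))) :
    (freeCells I R C).Finite :=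
  (Fintype.piFinset fun _ => Finset.Ico (-⌈R⌉) ⌈R⌉).finite_toSet.subset fun _ hk =>
    Fintype.mem_piFinset.mpr (openBox_inter_cube_nonempty_iff.mp hk.2.1)

theorem eq_of_mem_freeCells {F : Set (EuclideanSpace ℝ (Fin d))} {x x' : EuclideanSpace ℝ (Fin d)}
    {k : Fin d → ℤ} (hk : k ∈ freeCells I R (connectedComponentIn F x))
    (hk' : k ∈ freeCells I R (connectedComponentIn F x')) :
    connectedComponentIn F x = connectedComponentIn F x' := by
  obtain ⟨z, hz⟩ := hk.2.1
  rw [connectedComponentIn_eq (hk.2.2 hz), connectedComponentIn_eq (hk'.2.2 hz)]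

theorem freeCells_nonempty (hR : 0 < R) (hAB : A ⊆ ⋃ m ∈ I, latticeCube d m)
    {x y : EuclideanSpace ℝ (Fin d)} (hy : y ∈ connectedComponentIn (cube d R \ A) x)
    (hyI : y ∉ ⋃ m ∈ I, latticeCube d m) :
    (freeCells I R (connectedComponentIn (cube d R \ A) x)).Nonempty := by
  have hyR : y ∈ cube d R := (connectedComponentIn_subset _ _ hy).1
  obtain ⟨δ, hδ, hball⟩ := isOpen_iff.mp (isClosed_biUnion_latticeCube I).isOpen_compl y hyI
  obtain ⟨z, ⟨hzy, hzR⟩, hz⟩ := exists_mem_ball_inter_cube_forall_notMem_range_intCast hR hyR hδ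
  set k : Fin d → ℤ := fun i => ⌊z i⌋
  have hzk : z ∈ openBox k (k + 1) := fun i =>
    ⟨(Int.floor_le _).lt_of_ne fun h => hz i ⟨_, h⟩, by
      simp only [Pi.add_apply, Pi.one_apply, Int.cast_add, Int.cast_one]
      exact Int.lt_floor_add_one _⟩
  have hkI : k ∉ I := fun hk => hball hzy (mem_biUnion hk (openBox_subset_latticeCube k hzk))
  have hball_sub : ball y δ ∩ cube d R ⊆ connectedComponentIn (cube d R \ A) x :=
    ((convex_ball y δ).inter (convex_cube R)).isPreconnected.subset_connectedComponentIn_of_mem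
      (fun w hw => ⟨hw.2, fun hwA => hball hw.1 (hAB hwA)⟩) ⟨mem_ball_self hδ, hyR⟩ hy
  refine ⟨k, hkI, ⟨z, hzk, hzR⟩, ?_⟩
  exact (isPreconnected_openBox_inter_cube _ _ R).subset_connectedComponentIn_of_mem
    (openBox_inter_cube_subset_diff hAB (by simpa using hkI)) ⟨hzk, hzR⟩ (hball_sub ⟨hzy, hzR⟩)

theorem add_single_mem_freeCells (hAB : A ⊆ ⋃ m ∈ I, latticeCube d m)
    {x : EuclideanSpace ℝ (Fin d)} {k : Fin d → ℤ} (i : Fin d)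
    (hk : k ∈ freeCells I R (connectedComponentIn (cube d R \ A) x))
    (hkI : k + Pi.single i 1 ∉ I)
    (hne : (openBox (k + Pi.single i 1) (k + Pi.single i 1 + 1) ∩ cube d R).Nonempty) :
    k + Pi.single i 1 ∈ freeCells I R (connectedComponentIn (cube d R \ A) x) := by
  have hle : k ≤ k + Pi.single i 1 := le_add_of_nonneg_right (Pi.single_nonneg.mpr zero_le_one)
  have hbox : openBox k (k + Pi.single i 1 + 1) ∩ cube d R ⊆
      connectedComponentIn (cube d R \ A) x := by
    obtain ⟨z, hz⟩ := hk.2.1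
    refine (isPreconnected_openBox_inter_cube _ _ R).subset_connectedComponentIn_of_mem
      (openBox_inter_cube_subset_diff hAB fun m hm hmk => ?_)
      ⟨openBox_subset_openBox le_rfl (add_le_add_left hle 1) hz.1, hz.2⟩ (hk.2.2 hz)
    rcases Icc_add_single_subset k i hmk with rfl | rfl
    exacts [hk.1 hm, hkI hm]
  exact ⟨hkI, hne, fun z hz => hbox ⟨openBox_subset_openBox hle le_rfl hz.1, hz.2⟩⟩

theorem ncard_components_not_subset_le (hR : 0 < R) (i : Fin d)
    (hAB : A ⊆ ⋃ m ∈ I, latticeCube d m) :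
    {C | (∃ x ∈ cube d R \ A, C = connectedComponentIn (cube d R \ A) x) ∧
        ¬ C ⊆ ⋃ m ∈ I, latticeCube d m}.ncard ≤
      I.card + (Finset.Ico (-⌈R⌉) ⌈R⌉).card ^ (d - 1) := by
  classical
  set S := {C | (∃ x ∈ cube d R \ A, C = connectedComponentIn (cube d R \ A) x) ∧
    ¬ C ⊆ ⋃ m ∈ I, latticeCube d m}
  have htop (C) (hC : C ∈ S) : ∃ k ∈ freeCells I R C, ∀ k' ∈ freeCells I R C, k' i ≤ k i := by
    obtain ⟨⟨x, -, rfl⟩, hCI⟩ := hC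
    obtain ⟨y, hy, hyI⟩ := not_subset.mp hCI
    exact exists_max_image _ _ (finite_freeCells I R _) (freeCells_nonempty hR hAB hy hyI)
  choose! top htop_mem htop_max using htop
  set box := Fintype.piFinset fun _ : Fin d => Finset.Ico (-⌈R⌉) ⌈R⌉
  set layer := Fintype.piFinset (Function.update (fun _ : Fin d => Finset.Ico (-⌈R⌉) ⌈R⌉) i {⌈R⌉})
  have hmaps : ∀ C ∈ S, top C + Pi.single i 1 ∈ (↑(I ∪ layer) : Set (Fin d → ℤ)) := by
    intro C hC
    obtain ⟨⟨x, -, rfl⟩, -⟩ := id hC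
    have hbox : top _ ∈ box :=
      Fintype.mem_piFinset.mpr (openBox_inter_cube_nonempty_iff.mp (htop_mem _ hC).2.1)
    rw [Finset.coe_union, mem_union]
    refine (add_single_mem_piFinset_or i hbox).imp (fun hshift => ?_) id
    by_contra hI
    have := htop_max _ hC _ (add_single_mem_freeCells hAB i (htop_mem _ hC) hI
      (openBox_inter_cube_nonempty_iff.mpr (Fintype.mem_piFinset.mp hshift)))
    simp at this
  have hinj : InjOn (fun C => top C + Pi.single i 1) S := by
    intro C hC C' hC' hCC'
    obtain ⟨⟨x, -, rfl⟩, -⟩ := id hC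
    obtain ⟨⟨x', -, rfl⟩, -⟩ := id hC'
    have htop_eq : top _ = top _ := add_right_cancel hCC'
    exact eq_of_mem_freeCells (htop_mem _ hC) (htop_eq ▸ htop_mem _ hC')
  calc S.ncard ≤ (I ∪ layer).card :=
        (ncard_le_ncard_of_injOn _ hmaps hinj).trans_eq (ncard_coe_finset _)
    _ ≤ I.card + layer.card := Finset.card_union_le _ _
    _ = _ := by rw [card_piFinset_update_singleton, Fintype.card_fin]

end

theorem card_Ico_neg_ceil_le {R : ℝ} (hR : 1 < R) :
    ((Finset.Ico (-⌈R⌉) ⌈R⌉).card : ℝ) ≤ 4 * R := by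
  have hceil : (⌈R⌉ : ℝ) < R + 1 := Int.ceil_lt_add_one R
  have hpos : 0 ≤ ⌈R⌉ := Int.ceil_nonneg (by linarith)
  rw [Int.card_Ico, sub_neg_eq_add, ← Int.cast_natCast, Int.toNat_of_nonneg (by omega)]
  push_cast
  linarith

/-- If `B ⊆ [-R,R]^d` is a finite union of unit lattice cubes and `A ⊆ B` is closed,
the number of connected components of `[-R,R]^d \ A` not contained in `B` is at most
`Vol(B) + c·R^{d-1}` for a constant `c` depending only on `d`. -/
theorem components_not_in_B_bound (d : ℕ) (hd : 1 ≤ d) :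
    ∃ c > 0, ∀ R : ℝ, 1 < R → ∀ I : Finset (Fin d → ℤ),
      ∀ B : Set (EuclideanSpace ℝ (Fin d)), B = ⋃ k ∈ I, latticeCube d k →
      B ⊆ cube d R →
      ∀ A : Set (EuclideanSpace ℝ (Fin d)), IsClosed A → A ⊆ B →
      (Set.ncard {C : Set (EuclideanSpace ℝ (Fin d)) |
          (∃ x ∈ cube d R \ A, C = connectedComponentIn (cube d R \ A) x) ∧ ¬ C ⊆ B} : ℝ)
        ≤ I.card + c * R ^ (d - 1) := by
  refine ⟨4 ^ (d - 1), by positivity, ?_⟩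
  rintro R hR I B rfl - A - hAB
  calc _ ≤ ((I.card + (Finset.Ico (-⌈R⌉) ⌈R⌉).card ^ (d - 1) : ℕ) : ℝ) := by
        exact_mod_cast ncard_components_not_subset_le (by linarith) ⟨0, hd⟩ hAB
    _ ≤ I.card + (4 * R) ^ (d - 1) := by
        push_cast
        gcongr
        exact card_Ico_neg_ceil_le hR
    _ = I.card + 4 ^ (d - 1) * R ^ (d - 1) := by rw [mul_pow]
end
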